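/- Explicit formula for the Rainich index of the square of a regular skew-symmetric tensor: let U be a unitary 2-form on ℝ⁴, φ ∈ ℝ, ψ ∈ (0, π/2), A := e^φ·(cos ψ · U + sin ψ · (*U)), and K := Â∘Â. Set a := tr K and b := tr(K∘K). Then a = 2e^{2φ}·cos 2ψ, b = e^{4φ}·(1 + cos²2ψ), 4b − a² = 4e^{4φ} > 0, 2(2b − a²) = (2e^{2φ}·sin 2ψ)² > 0, and ψ = arctan[ (√(4b − a²) − a) / √(2(2b − a²)) ]. -/

import Mathlib

open Matrix Real

/-- Spacetime `ℝ⁴` with the standard basis. -/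
abbrev V4 : Type := Fin 4 → ℝ

/-- `4×4` real matrices: components of bilinear forms / endomorphisms of `ℝ⁴`
in the standard basis `(e₀,e₁,e₂,e₃)`. -/
abbrev Mat4 : Type := Matrix (Fin 4) (Fin 4) ℝ

/-- The Minkowski metric `diag(-1,1,1,1)` (it equals its own inverse). -/
noncomputable def ηm : Mat4 := Matrix.diagonal ![-1, 1, 1, 1]

/-- The Minkowski bilinear form `η(x,y) = -x₀y₀ + x₁y₁ + x₂y₂ + x₃y₃`. -/
noncomputable def ηb (x y : V4) : ℝ := x ⬝ᵥ ηm *ᵥ y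

/-- A vector `x` is timelike if `η(x,x) < 0`. -/
noncomputable def Timelike (x : V4) : Prop := ηb x x < 0

/-- Evaluation of the bilinear form with component matrix `B`:
`B(x,y) = Σ xᵅ B_{αβ} yᵝ`. -/
noncomputable def bil (B : Mat4) (x y : V4) : ℝ := x ⬝ᵥ B *ᵥ y

/-- A 2-form is a skew-symmetric bilinear form. -/
noncomputable def IsTwoForm (B : Mat4) : Prop := Bᵀ = -B

/-- The endomorphism `B̂` associated with the bilinear form `B`, i.e. the unique
endomorphism with `η(B̂x, y) = B(x,y)` for all `x, y`.  (Indeed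
`ηb (hat B *ᵥ x) y = bil B x y`.) -/
noncomputable def hat (B : Mat4) : Mat4 := ηm * Bᵀ

/-- The totally antisymmetric Levi-Civita symbol on four indices, `ε₀₁₂₃ = 1`. -/
noncomputable def lc (a b c d : Fin 4) : ℝ :=
  (((b : ℕ) : ℝ) - ((a : ℕ) : ℝ)) * (((c : ℕ) : ℝ) - ((a : ℕ) : ℝ)) *
    (((d : ℕ) : ℝ) - ((a : ℕ) : ℝ)) * (((c : ℕ) : ℝ) - ((b : ℕ) : ℝ)) *
    (((d : ℕ) : ℝ) - ((b : ℕ) : ℝ)) * (((d : ℕ) : ℝ) - ((c : ℕ) : ℝ)) / 12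

/-- The Hodge dual of a 2-form:
`(*F)(e_α,e_β) = (1/2) Σ ε_{αβγδ} η^{γμ} η^{δν} F(e_μ,e_ν)`. -/
noncomputable def hodge (F : Mat4) : Mat4 :=
  Matrix.of fun α β => (1/2) * ∑ γ, ∑ δ, ∑ μ, ∑ ν, lc α β γ δ * ηm γ μ * ηm δ ν * F μ ν

/-- A unitary 2-form: `tr(Û∘Û) = 2` and `tr(Û∘(*U)̂) = 0`. -/
noncomputable def IsUnitary (U : Mat4) : Prop :=
  IsTwoForm U ∧ (hat U * hat U).trace = 2 ∧ (hat U * hat (hodge U)).trace = 0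

/-- An endomorphism `L` is η-self-adjoint if `η(Lx,y) = η(x,Ly)` for all `x, y`. -/
noncomputable def SelfAdj (L : Mat4) : Prop := ∀ x y : V4, ηb (L *ᵥ x) y = ηb x (L *ᵥ y)

/-!
With `M = Û` and `N = (*U)̂`, the identities `M N = N M = ¼ tr(M N)` and `M² - N² = ½ tr(M²)`,
valid for every 2-form, show that for unitary `U` we have `M N = N M = 0` and `N² = M² - 1`.
Hence `P = M²` is an idempotent of trace `2`, and `K = e^{2φ} (cos²ψ P - sin²ψ (1 - P))` has the
eigenvalues `e^{2φ} cos²ψ` and `-e^{2φ} sin²ψ`, each twice. This gives `tr K` and `tr K²`; the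
formula for `ψ` is the half-angle identity `tan ψ = (1 - cos 2ψ) / sin 2ψ`.
-/

theorem Real.one_sub_cos_two_mul_div_sin_two_mul (x : ℝ) :
    (1 - cos (2 * x)) / sin (2 * x) = tan x := by
  rcases eq_or_ne (sin x) 0 with hs | hs
  · simp [sin_two_mul, hs, tan_eq_sin_div_cos]
  · rw [tan_eq_sin_div_cos, sin_two_mul,
      ← mul_div_mul_left (sin x) (cos x) (mul_ne_zero two_ne_zero hs), cos_two_mul']
    congr 1
    linear_combination -sin_sq_add_cos_sq x

theorem IsIdempotentElem.smul_add_smul_one_sub_mul_self {R A : Type*} [CommRing R] [Ring A]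
    [Algebra R A] {P : A} (hP : IsIdempotentElem P) (x y : R) :
    (x • P + y • (1 - P)) * (x • P + y • (1 - P)) = (x ^ 2) • P + (y ^ 2) • (1 - P) := by
  simp only [add_mul, mul_add, smul_mul_smul_comm, hP.eq, hP.mul_one_sub_self,
    hP.one_sub_mul_self, hP.one_sub.eq, smul_zero, add_zero, zero_add, sq]

noncomputable def skew4 (a b c d e f : ℝ) : Mat4 :=
  !![0, a, b, c; -a, 0, d, e; -b, -d, 0, f; -c, -e, -f, 0]

lemma IsTwoForm.eq_skew4 {F : Mat4} (hF : IsTwoForm F) :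
    F = skew4 (F 0 1) (F 0 2) (F 0 3) (F 1 2) (F 1 3) (F 2 3) := by
  have h : ∀ i j, F i j = -F j i := fun i j => by
    simpa using congrFun (congrFun hF j) i
  ext i j
  fin_cases i <;> fin_cases j <;> simp [skew4] <;>
    linarith [h 0 0, h 1 1, h 2 2, h 3 3, h 1 0, h 2 0, h 3 0, h 2 1, h 3 1, h 3 2]

lemma hodge_apply (F : Mat4) (α β : Fin 4) :
    hodge F α β = (1 / 2) * ∑ γ, ∑ δ, lc α β γ δ * ηm γ γ * ηm δ δ * F γ δ := by
  simp only [hodge, ηm, of_apply, diagonal_apply, mul_ite, ite_mul, mul_zero, zero_mul,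
    Finset.sum_ite_eq, Finset.mem_univ, if_true]

lemma hodge_skew4 (a b c d e f : ℝ) :
    hodge (skew4 a b c d e f) = skew4 f (-e) d (-c) b (-a) := by
  ext i j
  fin_cases i <;> fin_cases j <;> simp [hodge_apply, skew4, lc, ηm, Fin.sum_univ_four] <;> ring

lemma hat_skew4 (a b c d e f : ℝ) :
    hat (skew4 a b c d e f) = !![0, a, b, c; a, 0, -d, -e; b, d, 0, -f; c, e, f, 0] := by
  ext i j
  fin_cases i <;> fin_cases j <;> simp [hat, skew4, ηm, Matrix.mul_apply, Fin.sum_univ_four]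

lemma hat_add (B C : Mat4) : hat (B + C) = hat B + hat C := by
  simp [hat, Matrix.mul_add]

lemma hat_smul (c : ℝ) (B : Mat4) : hat (c • B) = c • hat B := by
  simp [hat]

namespace IsTwoForm

variable {F : Mat4}

lemma hat_mul_hat_hodge (hF : IsTwoForm F) :
    hat F * hat (hodge F) = ((hat F * hat (hodge F)).trace / 4) • 1 := by
  rw [hF.eq_skew4, hodge_skew4, hat_skew4, hat_skew4]
  ext i j
  fin_cases i <;> fin_cases j <;> simp [Matrix.mul_apply, Matrix.trace, Fin.sum_univ_four] <;> ring

lemma hat_hodge_mul_hat (hF : IsTwoForm F) :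
    hat (hodge F) * hat F = ((hat F * hat (hodge F)).trace / 4) • 1 := by
  rw [hF.eq_skew4, hodge_skew4, hat_skew4, hat_skew4]
  ext i j
  fin_cases i <;> fin_cases j <;> simp [Matrix.mul_apply, Matrix.trace, Fin.sum_univ_four] <;> ring

lemma hat_mul_hat_sub_hat_hodge_mul_hat_hodge (hF : IsTwoForm F) :
    hat F * hat F - hat (hodge F) * hat (hodge F) = ((hat F * hat F).trace / 2) • 1 := by
  rw [hF.eq_skew4, hodge_skew4, hat_skew4, hat_skew4]
  ext i j
  fin_cases i <;> fin_cases j <;> simp [Matrix.trace, Fin.sum_univ_four] <;> ring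

end IsTwoForm

namespace IsUnitary

variable {U : Mat4}

lemma hat_mul_hat_hodge_eq_zero (hU : IsUnitary U) : hat U * hat (hodge U) = 0 := by
  rw [hU.1.hat_mul_hat_hodge, hU.2.2]
  simp

lemma hat_hodge_mul_hat_eq_zero (hU : IsUnitary U) : hat (hodge U) * hat U = 0 := by
  rw [hU.1.hat_hodge_mul_hat, hU.2.2]
  simp

lemma hat_hodge_mul_self (hU : IsUnitary U) :
    hat (hodge U) * hat (hodge U) = hat U * hat U - 1 := by
  have h := hU.1.hat_mul_hat_sub_hat_hodge_mul_hat_hodge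
  rw [hU.2.1, div_self two_ne_zero, one_smul] at h
  rw [← h, sub_sub_cancel]

lemma isIdempotentElem_hat_mul_self (hU : IsUnitary U) : IsIdempotentElem (hat U * hat U) :=
  calc hat U * hat U * (hat U * hat U)
      = hat U * hat U * (hat (hodge U) * hat (hodge U) + 1) := by
        rw [hU.hat_hodge_mul_self, sub_add_cancel]
    _ = hat U * (hat U * hat (hodge U)) * hat (hodge U) + hat U * hat U := by noncomm_ring
    _ = hat U * hat U := by rw [hU.hat_mul_hat_hodge_eq_zero]; simp

lemma trace_one_sub_hat_mul_self (hU : IsUnitary U) : (1 - hat U * hat U).trace = 2 := by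
  rw [trace_sub, trace_one, hU.2.1, Fintype.card_fin]
  norm_num

lemma hat_mul_self_duality_rotation (hU : IsUnitary U) (φ ψ : ℝ) :
    hat (exp φ • (cos ψ • U + sin ψ • hodge U)) * hat (exp φ • (cos ψ • U + sin ψ • hodge U)) =
      (exp (2 * φ) * cos ψ ^ 2) • (hat U * hat U) +
        (-(exp (2 * φ) * sin ψ ^ 2)) • (1 - hat U * hat U) := by
  simp only [hat_smul, hat_add, smul_add, add_mul, mul_add, smul_mul_smul_comm,
    hU.hat_mul_hat_hodge_eq_zero, hU.hat_hodge_mul_hat_eq_zero, hU.hat_hodge_mul_self,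
    smul_zero, add_zero, zero_add]
  rw [show exp (2 * φ) = exp φ * exp φ by rw [← exp_add, two_mul]]
  module

end IsUnitary

theorem rainich_index_formulas {E ψ a b : ℝ} (hE : 0 < E) (hψ0 : 0 < ψ) (hψ1 : ψ < π / 2)
    (ha : a = 2 * E * cos (2 * ψ)) (hb : b = E ^ 2 * (1 + cos (2 * ψ) ^ 2)) :
    4 * b - a ^ 2 = 4 * E ^ 2 ∧ 0 < 4 * b - a ^ 2 ∧
    2 * (2 * b - a ^ 2) = (2 * E * sin (2 * ψ)) ^ 2 ∧ 0 < 2 * (2 * b - a ^ 2) ∧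
    ψ = arctan ((√(4 * b - a ^ 2) - a) / √(2 * (2 * b - a ^ 2))) := by
  have hsin : 0 < sin (2 * ψ) := sin_pos_of_pos_of_lt_pi (by positivity) (by linarith)
  have hdisc : 4 * b - a ^ 2 = (2 * E) ^ 2 := by rw [ha, hb]; ring
  have hdisc' : 2 * (2 * b - a ^ 2) = (2 * E * sin (2 * ψ)) ^ 2 := by
    rw [ha, hb]
    linear_combination -4 * E ^ 2 * sin_sq_add_cos_sq (2 * ψ)
  refine ⟨by rw [hdisc]; ring, by rw [hdisc]; positivity, hdisc', by rw [hdisc']; positivity, ?_⟩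
  rw [hdisc, hdisc', sqrt_sq (by positivity), sqrt_sq (by positivity), ha,
    ← mul_one_sub, mul_div_mul_left _ _ (by positivity), one_sub_cos_two_mul_div_sin_two_mul,
    arctan_tan (by linarith) hψ1]

/-- Explicit formula for the Rainich index of the square of a regular
skew-symmetric tensor `A = e^φ(cos ψ · U + sin ψ · *U)`. -/
theorem stmt10 (U : Mat4) (hU : IsUnitary U) (φ ψ : ℝ)
    (hψ0 : 0 < ψ) (hψ1 : ψ < π/2) (A K : Mat4)
    (hA : A = Real.exp φ • (Real.cos ψ • U + Real.sin ψ • hodge U))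
    (hK : K = hat A * hat A)
    (a b : ℝ) (ha : a = K.trace) (hb : b = (K * K).trace) :
    a = 2 * Real.exp (2*φ) * Real.cos (2*ψ) ∧
    b = Real.exp (4*φ) * (1 + (Real.cos (2*ψ))^2) ∧
    4*b - a^2 = 4 * Real.exp (4*φ) ∧ 0 < 4*b - a^2 ∧
    2*(2*b - a^2) = (2 * Real.exp (2*φ) * Real.sin (2*ψ))^2 ∧
    0 < 2*(2*b - a^2) ∧
    ψ = Real.arctan ((Real.sqrt (4*b - a^2) - a) / Real.sqrt (2*(2*b - a^2))) := by
  have hKP : K = (exp (2 * φ) * cos ψ ^ 2) • (hat U * hat U) +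
      (-(exp (2 * φ) * sin ψ ^ 2)) • (1 - hat U * hat U) := by
    rw [hK, hA, hU.hat_mul_self_duality_rotation]
  have ha' : a = 2 * exp (2 * φ) * cos (2 * ψ) := by
    rw [ha, hKP, trace_add, trace_smul, trace_smul, hU.2.1, hU.trace_one_sub_hat_mul_self,
      cos_two_mul', smul_eq_mul, smul_eq_mul]
    ring
  have hb' : b = exp (2 * φ) ^ 2 * (1 + cos (2 * ψ) ^ 2) := by
    rw [hb, hKP, hU.isIdempotentElem_hat_mul_self.smul_add_smul_one_sub_mul_self, trace_add,
      trace_smul, trace_smul, hU.2.1, hU.trace_one_sub_hat_mul_self, cos_two_mul', smul_eq_mul,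
      smul_eq_mul]
    linear_combination exp (2 * φ) ^ 2 * (sin ψ ^ 2 + cos ψ ^ 2 + 1) * sin_sq_add_cos_sq ψ
  rw [show exp (4 * φ) = exp (2 * φ) ^ 2 by rw [sq, ← exp_add]; ring_nf]
  exact ⟨ha', hb', rainich_index_formulas (exp_pos _) hψ0 hψ1 ha' hb'⟩
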